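/- arXiv:0710.2393 — 6 statements merged into one kernel-verified Lean document; each statement's English description precedes it below -/
import Mathlib

section
/- For two invariants P of weight m and Q of weight n (i.e. P(jᵏ(f∘φ)) = (φ′)ᵐ·P((jᵏf)∘φ) and similarly for Q), the bracket [P,Q] := n·(DP)·Q − m·P·(DQ), where D is total differentiation with respect to z, is again invariant by reparametrization, of weight m + n + 1. -/
lemma bracket_key (k l : ℕ) (u v : ℂ) :
    (k : ℂ) * (l : ℂ) * u ^ (k - 1) * u ^ l * v
      = (k : ℂ) * (l : ℂ) * u ^ k * u ^ (l - 1) * v := by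
  cases k with
  | zero => simp
  | succ k =>
    cases l with
    | zero => simp
    | succ l =>
      simp only [Nat.add_sub_cancel, pow_succ]
      ring

/-- If `P` and `Q` are jet polynomials, invariant by reparametrization of weights `m`
and `n` respectively, and `DP`, `DQ` denote their total derivatives (so that applying
`P` along a curve and then differentiating equals applying `DP`), then the bracket
`[P,Q] = n·DP·Q − m·P·DQ` is again invariant by reparametrization, of weight `m+n+1`. -/
theorem bracket_invariant_weight
    (ν : ℕ) (m n : ℕ)
    (P Q DP DQ : (ℂ → Fin ν → ℂ) → ℂ → ℂ)
    (hDP : ∀ f, deriv (P f) = DP f)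
    (hDQ : ∀ f, deriv (Q f) = DQ f)
    (hPdiff : ∀ f, Differentiable ℂ (P f))
    (hQdiff : ∀ f, Differentiable ℂ (Q f))
    (hPinv : ∀ (f : ℂ → Fin ν → ℂ) (φ : ℂ → ℂ), Differentiable ℂ φ →
      ∀ z, P (f ∘ φ) z = (deriv φ z) ^ m * P f (φ z))
    (hQinv : ∀ (f : ℂ → Fin ν → ℂ) (φ : ℂ → ℂ), Differentiable ℂ φ →
      ∀ z, Q (f ∘ φ) z = (deriv φ z) ^ n * Q f (φ z))
    (f : ℂ → Fin ν → ℂ) (φ : ℂ → ℂ)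
    (hφ : Differentiable ℂ φ) (hφ' : Differentiable ℂ (deriv φ)) (z : ℂ) :
    (n : ℂ) * DP (f ∘ φ) z * Q (f ∘ φ) z - (m : ℂ) * P (f ∘ φ) z * DQ (f ∘ φ) z =
      (deriv φ z) ^ (m + n + 1) *
        ((n : ℂ) * DP f (φ z) * Q f (φ z) - (m : ℂ) * P f (φ z) * DQ f (φ z)) := by
  have hPφ : P (f ∘ φ) = fun w => (deriv φ w) ^ m * P f (φ w) := funext (hPinv f φ hφ)
  have hQφ : Q (f ∘ φ) = fun w => (deriv φ w) ^ n * Q f (φ w) := funext (hQinv f φ hφ)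
  have hDP1 : DP (f ∘ φ) z =
      ((m : ℂ) * (deriv φ z) ^ (m - 1) * deriv (deriv φ) z) * P f (φ z)
        + (deriv φ z) ^ m * (DP f (φ z) * deriv φ z) := by
    rw [← hDP, hPφ]
    have h1 : HasDerivAt (fun w => (deriv φ w) ^ m)
        ((m : ℂ) * (deriv φ z) ^ (m - 1) * deriv (deriv φ) z) z := ((hφ' z).hasDerivAt).pow m
    have h2 : HasDerivAt (fun w => P f (φ w)) (DP f (φ z) * deriv φ z) z := by
      have := ((hPdiff f (φ z)).hasDerivAt).comp z ((hφ z).hasDerivAt)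
      rwa [hDP f] at this
    exact (h1.mul h2).deriv
  have hDQ1 : DQ (f ∘ φ) z =
      ((n : ℂ) * (deriv φ z) ^ (n - 1) * deriv (deriv φ) z) * Q f (φ z)
        + (deriv φ z) ^ n * (DQ f (φ z) * deriv φ z) := by
    rw [← hDQ, hQφ]
    have h1 : HasDerivAt (fun w => (deriv φ w) ^ n)
        ((n : ℂ) * (deriv φ z) ^ (n - 1) * deriv (deriv φ) z) z := ((hφ' z).hasDerivAt).pow n
    have h2 : HasDerivAt (fun w => Q f (φ w)) (DQ f (φ z) * deriv φ z) z := by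
      have := ((hQdiff f (φ z)).hasDerivAt).comp z ((hφ z).hasDerivAt)
      rwa [hDQ f] at this
    exact (h1.mul h2).deriv
  rw [hDP1, hDQ1, hPinv f φ hφ z, hQinv f φ hφ z]
  linear_combination (norm := ring_nf)
    bracket_key m n (deriv φ z) (deriv (deriv φ) z * P f (φ z) * Q f (φ z))
end

section
/- Jacobi-type identity for weighted brackets: for any three elements P, Q, R of a commutative ring equipped with a derivation D, with assigned weights m, n, o, and bracket defined by [A,B] := wt(B)·DA·B − wt(A)·A·DB where the weight of a bracket [A,B] is wt(A)+wt(B)+1, one has [[P,Q],R] + [[R,P],Q] + [[Q,R],P] = 0. -/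
/-- The weighted bracket of `A` (weight `wA`) and `B` (weight `wB`):
`[A,B] := wB • D A * B − wA • A * D B`. -/
def weightedBracket {A : Type*} [CommRing A] (D : A → A) (wA wB : ℤ) (a b : A) : A :=
  wB • D a * b - wA • a * D b

/-- Jacobi-type identity for weighted brackets: for elements `P, Q, R` of weights
`m, n, o` in a commutative ring with derivation `D`, where a bracket `[A,B]` has
weight `wt A + wt B + 1`, one has `[[P,Q],R] + [[R,P],Q] + [[Q,R],P] = 0`. -/
theorem weighted_bracket_jacobi
    {A : Type*} [CommRing A] (D : Derivation ℤ A A)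
    (m n o : ℤ) (P Q R : A) :
    weightedBracket (⇑D) (m + n + 1) o (weightedBracket (⇑D) m n P Q) R +
      weightedBracket (⇑D) (o + m + 1) n (weightedBracket (⇑D) o m R P) Q +
      weightedBracket (⇑D) (n + o + 1) m (weightedBracket (⇑D) n o Q R) P = 0 := by
  simp only [weightedBracket, map_sub, Derivation.leibniz, map_zsmul, smul_sub, smul_add,
    smul_smul, zsmul_eq_mul, smul_eq_mul, map_intCast, Derivation.map_intCast]
  push_cast
  ring
end

section
/- The bracket of the two weight-5 invariants reproduces M⁸ up to factor: with D the total derivative operator, Λ₁⁵ := Δ^{1,3}f₁′ − 3Δ^{1,2}f₁″, Λ₂⁵ := Δ^{1,3}f₂′ − 3Δ^{1,2}f₂″, Λ³ := Δ^{1,2}, and M⁸ := 3Δ^{1,4}Δ^{1,2} + 12Δ^{2,3}Δ^{1,2} − 5Δ^{1,3}Δ^{1,3}, one has the polynomial identity 5·D(Λ₁⁵)·Λ₂⁵ − 5·Λ₁⁵·D(Λ₂⁵) = −5·Λ³·M⁸. -/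
/-- The bracket of the two weight-5 invariants reproduces `M⁸` up to factor:
with `D` the total derivative (`D(fᵢ^{(k)}) = fᵢ^{(k+1)}`),
`Λ₁⁵ := Δ^{1,3}f₁′ − 3Δ^{1,2}f₁″`, `Λ₂⁵ := Δ^{1,3}f₂′ − 3Δ^{1,2}f₂″`,
`Λ³ := Δ^{1,2}`, `M⁸ := 3Δ^{1,4}Δ^{1,2} + 12Δ^{2,3}Δ^{1,2} − 5Δ^{1,3}Δ^{1,3}`,
one has `5·D(Λ₁⁵)·Λ₂⁵ − 5·Λ₁⁵·D(Λ₂⁵) = −5·Λ³·M⁸`. -/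
theorem bracket_lambda5_lambda5
    {A : Type*} [CommRing A] (D : Derivation ℤ A A) (a b : ℕ → A)
    (ha : ∀ k, D (a k) = a (k + 1)) (hb : ∀ k, D (b k) = b (k + 1)) :
    5 * D ((a 1 * b 3 - a 3 * b 1) * a 1 - 3 * (a 1 * b 2 - a 2 * b 1) * a 2) *
        ((a 1 * b 3 - a 3 * b 1) * b 1 - 3 * (a 1 * b 2 - a 2 * b 1) * b 2)
      - 5 * ((a 1 * b 3 - a 3 * b 1) * a 1 - 3 * (a 1 * b 2 - a 2 * b 1) * a 2) *
        D ((a 1 * b 3 - a 3 * b 1) * b 1 - 3 * (a 1 * b 2 - a 2 * b 1) * b 2) =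
      -5 * (a 1 * b 2 - a 2 * b 1) *
        (3 * (a 1 * b 4 - a 4 * b 1) * (a 1 * b 2 - a 2 * b 1)
          + 12 * (a 2 * b 3 - a 3 * b 2) * (a 1 * b 2 - a 2 * b 1)
          - 5 * (a 1 * b 3 - a 3 * b 1) * (a 1 * b 3 - a 3 * b 1)) := by
  simp only [Derivation.leibniz, Derivation.map_sub, Derivation.leibniz_of_mul_eq_one,
    map_sub, map_mul, map_ofNat, smul_eq_mul, ha, hb]
  have h3 : (D (3 : A)) = 0 := by
    have : (3 : A) = ((3 : ℤ) : A) := by norm_num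
    rw [this, Derivation.map_intCast]
  simp only [h3]
  ring
end

section
/- Divisibility producing M⁸: for each i ∈ {1,2}, the bracket [Λᵢ⁵, Λ³] := 3·D(Λᵢ⁵)·Λ³ − 5·Λᵢ⁵·D(Λ³) equals fᵢ′·M⁸ as polynomials, where Λᵢ⁵ := Δ^{1,3}fᵢ′ − 3Δ^{1,2}fᵢ″, Λ³ := Δ^{1,2}, and M⁸ := 3Δ^{1,4}Δ^{1,2} + 12Δ^{2,3}Δ^{1,2} − 5Δ^{1,3}Δ^{1,3}. -/
/-- Divisibility producing `M⁸`: for each `i ∈ {1,2}` the bracket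
`[Λᵢ⁵, Λ³] := 3·D(Λᵢ⁵)·Λ³ − 5·Λᵢ⁵·D(Λ³)` equals `fᵢ′·M⁸`, where
`Λᵢ⁵ := Δ^{1,3}fᵢ′ − 3Δ^{1,2}fᵢ″`, `Λ³ := Δ^{1,2}`,
`M⁸ := 3Δ^{1,4}Δ^{1,2} + 12Δ^{2,3}Δ^{1,2} − 5Δ^{1,3}Δ^{1,3}`, and
`D` is the total derivative (`D(fⱼ^{(k)}) = fⱼ^{(k+1)}`). -/
theorem bracket_lambda5_lambda3_divisible
    {A : Type*} [CommRing A] (D : Derivation ℤ A A) (a b : ℕ → A)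
    (ha : ∀ k, D (a k) = a (k + 1)) (hb : ∀ k, D (b k) = b (k + 1)) :
    (3 * D ((a 1 * b 3 - a 3 * b 1) * a 1 - 3 * (a 1 * b 2 - a 2 * b 1) * a 2) *
          (a 1 * b 2 - a 2 * b 1)
        - 5 * ((a 1 * b 3 - a 3 * b 1) * a 1 - 3 * (a 1 * b 2 - a 2 * b 1) * a 2) *
          D (a 1 * b 2 - a 2 * b 1) =
      a 1 *
        (3 * (a 1 * b 4 - a 4 * b 1) * (a 1 * b 2 - a 2 * b 1)
          + 12 * (a 2 * b 3 - a 3 * b 2) * (a 1 * b 2 - a 2 * b 1)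
          - 5 * (a 1 * b 3 - a 3 * b 1) * (a 1 * b 3 - a 3 * b 1))) ∧
    (3 * D ((a 1 * b 3 - a 3 * b 1) * b 1 - 3 * (a 1 * b 2 - a 2 * b 1) * b 2) *
          (a 1 * b 2 - a 2 * b 1)
        - 5 * ((a 1 * b 3 - a 3 * b 1) * b 1 - 3 * (a 1 * b 2 - a 2 * b 1) * b 2) *
          D (a 1 * b 2 - a 2 * b 1) =
      b 1 *
        (3 * (a 1 * b 4 - a 4 * b 1) * (a 1 * b 2 - a 2 * b 1)
          + 12 * (a 2 * b 3 - a 3 * b 2) * (a 1 * b 2 - a 2 * b 1)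
          - 5 * (a 1 * b 3 - a 3 * b 1) * (a 1 * b 3 - a 3 * b 1))) := by
  have h3 : D (3:A) = 0 := by
    have : ((3:ℤ):A) = (3:A) := by norm_num
    rw [← this, Derivation.map_intCast]
  constructor <;>
  · simp only [h3, map_sub, map_mul, Derivation.leibniz, map_ofNat, Derivation.map_smul_of_tower, map_natCast, ha, hb, smul_eq_mul]
    ring
end

section
/- Algebraic independence of the restricted fundamental bi-invariants (level 4): setting x := −f₁″f₂′ and y := f₁″ as independent indeterminates, if S and T are polynomials in two variables such that S(x, 15y²x) + 3yx·T(x, 15y²x) = 0 identically in ℂ[x,y], then S = 0 and T = 0. -/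
open MvPolynomial

private lemma eval_vanish_ne_zero (P : MvPolynomial (Fin 2) ℂ)
    (h : ∀ a b : ℂ, a ≠ 0 → b ≠ 0 → eval ![a, b] P = 0) : P = 0 := by
  have hz : X 0 * X 1 * P = 0 := by
    apply MvPolynomial.funext
    intro x
    simp only [map_mul, eval_X, map_zero]
    rcases eq_or_ne (x 0) 0 with h0 | h0
    · simp [h0]
    rcases eq_or_ne (x 1) 0 with h1 | h1
    · simp [h1]
    have hx : (![x 0, x 1] : Fin 2 → ℂ) = x := by
      funext i; fin_cases i <;> simp
    have := h (x 0) (x 1) h0 h1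
    rw [hx] at this
    simp [this]
  have hX : (X 0 * X 1 : MvPolynomial (Fin 2) ℂ) ≠ 0 :=
    mul_ne_zero (X_ne_zero 0) (X_ne_zero 1)
  exact (mul_eq_zero.mp hz).resolve_left hX

/-- Algebraic independence lemma for the restricted fundamental bi-invariants at
jet level 4: with `x, y` independent indeterminates, if
`S(x, 15y²x) + 3yx·T(x, 15y²x) = 0` in `ℂ[x,y]`, then `S = 0` and `T = 0`. -/
theorem restricted_biinvariants_relation_trivial
    (S T : MvPolynomial (Fin 2) ℂ)
    (h : aeval
          ![(X 0 : MvPolynomial (Fin 2) ℂ), 15 * X 1 ^ 2 * X 0] S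
        + 3 * X 1 * X 0 *
          aeval ![(X 0 : MvPolynomial (Fin 2) ℂ), 15 * X 1 ^ 2 * X 0] T = 0) :
    S = 0 ∧ T = 0 := by
  -- evaluate the identity at (a, b)
  have key : ∀ a b : ℂ,
      eval ![a, 15 * b ^ 2 * a] S + 3 * b * a * eval ![a, 15 * b ^ 2 * a] T = 0 := by
    intro a b
    have := congrArg (aeval (R := ℂ) ![a, b]) h
    simp only [map_add, map_mul, comp_aeval_apply, map_zero, map_ofNat, aeval_X] at this
    have hv : (fun i => (aeval (R := ℂ) ![a, b])
        (![(X 0 : MvPolynomial (Fin 2) ℂ), 15 * X 1 ^ 2 * X 0] i))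
        = ![a, 15 * b ^ 2 * a] := by
      funext i; fin_cases i <;> simp
    rw [hv] at this
    exact this
  have main : ∀ a c : ℂ, a ≠ 0 → c ≠ 0 →
      eval ![a, c] S = 0 ∧ eval ![a, c] T = 0 := by
    intro a c ha hc
    obtain ⟨b, hb⟩ := IsAlgClosed.exists_pow_nat_eq (c / (15 * a)) (n := 2) (by norm_num)
    have h15a : (15 : ℂ) * a ≠ 0 := by
      exact mul_ne_zero (by norm_num) ha
    have hc' : 15 * b ^ 2 * a = c := by
      rw [hb]; field_simp
    have hb0 : b ≠ 0 := by
      intro h0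
      apply hc
      rw [← hc', h0]; ring
    have k1 := key a b
    have k2 := key a (-b)
    rw [show 15 * (-b) ^ 2 * a = 15 * b ^ 2 * a by ring] at k2
    rw [hc'] at k1 k2
    constructor
    · have : (2 : ℂ) * eval ![a, c] S = 0 := by linear_combination k1 + k2
      have h2 : (2 : ℂ) ≠ 0 := by norm_num
      exact (mul_eq_zero.mp this).resolve_left h2
    · have : (6 : ℂ) * b * a * eval ![a, c] T = 0 := by linear_combination k1 - k2
      have h6 : (6 : ℂ) * b * a ≠ 0 :=
        mul_ne_zero (mul_ne_zero (by norm_num) hb0) ha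
      exact (mul_eq_zero.mp this).resolve_left h6
  exact ⟨eval_vanish_ne_zero S fun a c ha hc => (main a c ha hc).1,
    eval_vanish_ne_zero T fun a c ha hc => (main a c ha hc).2⟩
end

section
/- The four polynomials f₁′, Λ³ = Δ^{1,2}, Λ⁷₁,₁ = (Δ^{1,4}+4Δ^{2,3})(f₁′)² − 10Δ^{1,3}f₁′f₁″ + 15Δ^{1,2}(f₁″)², and M⁸ = 3Δ^{1,4}Δ^{1,2} + 12Δ^{2,3}Δ^{1,2} − 5(Δ^{1,3})² are algebraically independent over ℂ in the polynomial ring ℂ[f₁′, f₂′, f₁″, f₂″, f₁‴, f₂‴, f₁⁗, f₂⁗]. -/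
open MvPolynomial

/-- The four polynomials `f₁′`, `Λ³ = Δ^{1,2}`,
`Λ⁷₁,₁ = (Δ^{1,4}+4Δ^{2,3})(f₁′)² − 10Δ^{1,3}f₁′f₁″ + 15Δ^{1,2}(f₁″)²`, and
`M⁸ = 3Δ^{1,4}Δ^{1,2} + 12Δ^{2,3}Δ^{1,2} − 5(Δ^{1,3})²` are algebraically
independent over `ℂ` in `ℂ[f₁′,…,f₁⁗, f₂′,…,f₂⁗]`. Here the 8 variables are
`X 0, …, X 3` for `f₁′, f₁″, f₁‴, f₁⁗` and `X 4, …, X 7` for `f₂′, f₂″, f₂‴, f₂⁗`,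
and `Δ^{α,β} := f₁^{(α)}f₂^{(β)} − f₁^{(β)}f₂^{(α)}`. -/
theorem four_biinvariants_algebraically_independent :
    AlgebraicIndependent ℂ
      ![(X 0 : MvPolynomial (Fin 8) ℂ),
        X 0 * X 5 - X 1 * X 4,
        ((X 0 * X 7 - X 3 * X 4) + 4 * (X 1 * X 6 - X 2 * X 5)) * X 0 ^ 2
          - 10 * (X 0 * X 6 - X 2 * X 4) * X 0 * X 1
          + 15 * (X 0 * X 5 - X 1 * X 4) * X 1 ^ 2,
        3 * (X 0 * X 7 - X 3 * X 4) * (X 0 * X 5 - X 1 * X 4)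
          + 12 * (X 1 * X 6 - X 2 * X 5) * (X 0 * X 5 - X 1 * X 4)
          - 5 * (X 0 * X 6 - X 2 * X 4) ^ 2] := by
  rw [algebraicIndependent_iff]
  intro P hP
  have key : ∀ z : Fin 4 → ℂ, eval z (X 0 * P) = 0 := by
    intro z
    rw [eval_mul, eval_X]
    by_cases hz : z 0 = 0
    · rw [hz, zero_mul]
    · obtain ⟨s, hs⟩ : ∃ s : ℂ, s ^ 2 = 60 * z 1 * z 2 - 20 * (z 0) ^ 2 * z 3 :=
        IsAlgClosed.exists_pow_nat_eq _ two_pos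
      obtain ⟨c, hc⟩ : ∃ c : ℂ, z 0 * c = z 1 :=
        ⟨z 1 / z 0, by field_simp⟩
      obtain ⟨d, hd⟩ : ∃ d : ℂ, 10 * z 0 ^ 2 * d = 30 * z 1 + s :=
        ⟨(30 * z 1 + s) / (10 * z 0 ^ 2), by field_simp; try ring⟩
      obtain ⟨w, hw⟩ : ∃ w : ℂ, 5 * z 0 ^ 2 * (z 0 * w) = 5 * z 2 + 15 * z 1 + 3 * s :=
        ⟨(5 * z 2 + 15 * z 1 + 3 * s) / (5 * z 0 ^ 3), by field_simp; try ring⟩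
      have hv : z 0 * (z 0)⁻¹ = 1 := mul_inv_cancel₀ hz
      set v : ℂ := (z 0)⁻¹ with hvdef
      set x : Fin 8 → ℂ := ![z 0, 1, 0, 0, 0, c, d, w] with hx
      have h1 : (aeval x)
          ((aeval (![(X 0 : MvPolynomial (Fin 8) ℂ),
        X 0 * X 5 - X 1 * X 4,
        ((X 0 * X 7 - X 3 * X 4) + 4 * (X 1 * X 6 - X 2 * X 5)) * X 0 ^ 2
          - 10 * (X 0 * X 6 - X 2 * X 4) * X 0 * X 1
          + 15 * (X 0 * X 5 - X 1 * X 4) * X 1 ^ 2,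
        3 * (X 0 * X 7 - X 3 * X 4) * (X 0 * X 5 - X 1 * X 4)
          + 12 * (X 1 * X 6 - X 2 * X 5) * (X 0 * X 5 - X 1 * X 4)
          - 5 * (X 0 * X 6 - X 2 * X 4) ^ 2])) P) = 0 := by rw [hP]; simp
      rw [comp_aeval_apply] at h1
      have hx0 : x 0 = z 0 := rfl
      have hx1 : x 1 = 1 := rfl
      have hx2 : x 2 = 0 := rfl
      have hx3 : x 3 = 0 := rfl
      have hx4 : x 4 = 0 := rfl
      have hx5 : x 5 = c := rfl
      have hx6 : x 6 = d := rfl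
      have hx7 : x 7 = w := rfl
      clear_value x
      have g0 : (aeval x) (X 0 : MvPolynomial (Fin 8) ℂ) = z 0 := by rw [aeval_X, hx0]
      have g1 : (aeval x) ((X 0 : MvPolynomial (Fin 8) ℂ) * X 5 - X 1 * X 4) = z 1 := by
        simp only [map_sub, map_mul, aeval_X, hx0, hx1, hx4, hx5]
        linear_combination hc
      have g2 : (aeval x) (((X 0 * X 7 - X 3 * X 4) + 4 * (X 1 * X 6 - X 2 * X 5)) * X 0 ^ 2
          - 10 * (X 0 * X 6 - X 2 * X 4) * X 0 * X 1
          + 15 * ((X 0 : MvPolynomial (Fin 8) ℂ) * X 5 - X 1 * X 4) * X 1 ^ 2) = z 2 := by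
        simp only [map_add, map_sub, map_mul, map_pow, map_ofNat, aeval_X,
          hx0, hx1, hx2, hx3, hx4, hx5, hx6, hx7]
        linear_combination (1/5 : ℂ) * hw + (-3/5 : ℂ) * hd + 15 * hc
      have g3 : (aeval x) (3 * (X 0 * X 7 - X 3 * X 4) * (X 0 * X 5 - X 1 * X 4)
          + 12 * (X 1 * X 6 - X 2 * X 5) * ((X 0 : MvPolynomial (Fin 8) ℂ) * X 5 - X 1 * X 4)
          - 5 * (X 0 * X 6 - X 2 * X 4) ^ 2) = z 3 := by
        simp only [map_add, map_sub, map_mul, map_pow, map_ofNat, aeval_X,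
          hx0, hx1, hx2, hx3, hx4, hx5, hx6, hx7]
        linear_combination
          (3 * (z 0) * w + 12 * d) * hc
          + ((3/5 : ℂ) * z 1 * v ^ 2) * hw
          + ((6/5 : ℂ) * z 1 * v ^ 2
              - v ^ 2 / 20 * (10 * z 0 ^ 2 * d + 30 * z 1 + s)) * hd
          + ((-(3 * z 1 * (z 0 * w)) - 12 * z 1 * d + 5 * z 0 ^ 2 * d ^ 2 + z 3)
              * (z 0 * v + 1)) * hv
          + (-(v ^ 2) / 20) * hs
      have hzz : (fun i => (aeval x)
          ((![(X 0 : MvPolynomial (Fin 8) ℂ),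
        X 0 * X 5 - X 1 * X 4,
        ((X 0 * X 7 - X 3 * X 4) + 4 * (X 1 * X 6 - X 2 * X 5)) * X 0 ^ 2
          - 10 * (X 0 * X 6 - X 2 * X 4) * X 0 * X 1
          + 15 * (X 0 * X 5 - X 1 * X 4) * X 1 ^ 2,
        3 * (X 0 * X 7 - X 3 * X 4) * (X 0 * X 5 - X 1 * X 4)
          + 12 * (X 1 * X 6 - X 2 * X 5) * (X 0 * X 5 - X 1 * X 4)
          - 5 * (X 0 * X 6 - X 2 * X 4) ^ 2]) i)) = z := by
        funext i
        fin_cases i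
        · exact g0
        · exact g1
        · exact g2
        · exact g3
      rw [hzz] at h1
      have h2 : eval z P = 0 := by
        rw [← coe_aeval_eq_eval]
        exact h1
      rw [h2, mul_zero]
  have h0 : (X 0 : MvPolynomial (Fin 4) ℂ) * P = 0 :=
    MvPolynomial.funext (by simpa using key)
  rcases mul_eq_zero.mp h0 with h | h
  · exact absurd h (X_ne_zero 0)
  · exact h
end
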